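/- arXiv:1804.00285 — 2 statements merged into one kernel-verified Lean document; each statement's English description precedes it below -/
import Mathlib

section
/- The wrapped normal density f_WN(·; μ, v∞) is a stationary density for the WOU conditional density: for every θ ∈ ℝ and every t > 0, ∫_{−π}^{π} f_WN(θ_s; μ, v∞)·p_t(θ | θ_s) dθ_s = f_WN(θ; μ, v∞). -/
/-!
Write `v = σ²/(2α)`, `r = e^{-αt}`, so that `γ_t = v (1 - r²)`. After the weights cancel,
`f_WN(θ_s) p_t(θ | θ_s)` is the `2π`-periodization in `θ_s - μ` of
`h(x) = φ_v(x) f_WN(θ; μ + r x, γ_t)`, so its integral over one period is `∫_ℝ h`.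
Expanding `f_WN(θ; μ + r x, γ_t)` over the windings `k`, each term integrates to
`φ_v(θ - μ + 2kπ)` by reversibility of the Gaussian AR(1) kernel,
`φ_v(x) φ_γ(c - r x) = φ_v(c) φ_γ(x - r c)`, and summing over `k` gives `f_WN(θ; μ, v)`.
All interchanges of sums and integrals are done in `ℝ≥0∞`, by monotone convergence.
-/

open MeasureTheory Real

/-- Centered Gaussian density with variance `v` on `ℝ`. -/
noncomputable def gaussDens (v x : ℝ) : ℝ :=
  (Real.sqrt (2 * Real.pi * v))⁻¹ * Real.exp (-(x ^ 2) / (2 * v))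

/-- Wrapped normal density `f_WN(θ; μ, v)`. -/
noncomputable def fWN (μ v θ : ℝ) : ℝ :=
  ∑' k : ℤ, gaussDens v (θ - μ + 2 * (k : ℝ) * Real.pi)

/-- Winding-number weights `w_k(θ)` with stationary variance `v∞ = σ²/(2α)`. -/
noncomputable def wnWeight (α μ σ : ℝ) (k : ℤ) (θ : ℝ) : ℝ :=
  gaussDens (σ ^ 2 / (2 * α)) (θ - μ + 2 * (k : ℝ) * Real.pi) / fWN μ (σ ^ 2 / (2 * α)) θ

/-- Conditional mean `μ_t^m(θ_s) = μ + e^{−αt}(θ_s − μ + 2mπ)`. -/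
noncomputable def wouMean (α μ : ℝ) (t : ℝ) (m : ℤ) (θs : ℝ) : ℝ :=
  μ + Real.exp (-(α * t)) * (θs - μ + 2 * (m : ℝ) * Real.pi)

/-- Conditional variance `γ_t = σ²(1 − e^{−2αt})/(2α)`. -/
noncomputable def wouVar (α σ t : ℝ) : ℝ :=
  σ ^ 2 * (1 - Real.exp (-(2 * α * t))) / (2 * α)

/-- The WOU conditional density `p_t(θ | θ_s)`. -/
noncomputable def pWOU (α μ σ t θ θs : ℝ) : ℝ :=
  ∑' m : ℤ, wnWeight α μ σ m θs * fWN (wouMean α μ t m θs) (wouVar α σ t) θ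

open Set ProbabilityTheory
open scoped ENNReal

lemma gaussDens_nonneg (v x : ℝ) : 0 ≤ gaussDens v x := by
  unfold gaussDens; positivity

lemma gaussDens_pos {v : ℝ} (hv : 0 < v) (x : ℝ) : 0 < gaussDens v x := by
  unfold gaussDens; positivity

@[fun_prop]
lemma measurable_gaussDens (v : ℝ) : Measurable (gaussDens v) := by
  unfold gaussDens; fun_prop

lemma gaussDens_sub_eq_gaussianPDFReal {v : ℝ} (hv : 0 ≤ v) (a x : ℝ) :
    gaussDens v (x - a) = gaussianPDFReal a ⟨v, hv⟩ x :=
  rfl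

lemma lintegral_ofReal_gaussDens_sub {v : ℝ} (hv : 0 < v) (a : ℝ) :
    ∫⁻ x, ENNReal.ofReal (gaussDens v (x - a)) = 1 := by
  simp_rw [gaussDens_sub_eq_gaussianPDFReal hv.le]
  exact lintegral_gaussianPDF_eq_one a fun h => hv.ne' (congrArg NNReal.toReal h)

lemma summable_gaussDens_add_int_mul {v : ℝ} (hv : 0 < v) (x : ℝ) :
    Summable fun k : ℤ => gaussDens v (x + 2 * k * π) := by
  refine ((HurwitzKernelBounds.summable_f_int 0 (x / (2 * π))
    (by positivity : 0 < 2 * π / v)).mul_left (√(2 * π * v))⁻¹).congr fun k => ?_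
  rw [HurwitzKernelBounds.f_int, pow_zero, one_mul, gaussDens]
  congr 2
  field_simp
  ring

lemma fWN_nonneg (μ v θ : ℝ) : 0 ≤ fWN μ v θ :=
  tsum_nonneg fun _ => gaussDens_nonneg _ _

lemma fWN_pos {v : ℝ} (hv : 0 < v) (μ θ : ℝ) : 0 < fWN μ v θ :=
  (summable_gaussDens_add_int_mul hv (θ - μ)).tsum_pos (fun _ => gaussDens_nonneg _ _) 0
    (gaussDens_pos hv _)

lemma ofReal_fWN {v : ℝ} (hv : 0 < v) (μ θ : ℝ) :
    ENNReal.ofReal (fWN μ v θ) =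
      ∑' k : ℤ, ENNReal.ofReal (gaussDens v (θ - μ + 2 * k * π)) :=
  ENNReal.ofReal_tsum_of_nonneg (fun _ => gaussDens_nonneg _ _)
    (summable_gaussDens_add_int_mul hv _)

@[fun_prop]
lemma measurable_fWN (v θ : ℝ) : Measurable fun μ => fWN μ v θ :=
  Measurable.tsum fun _ => by fun_prop

lemma gaussDens_mul_gaussDens_sub_mul_comm {v r : ℝ} (hv : v ≠ 0) (hr : 1 - r ^ 2 ≠ 0)
    (c x : ℝ) :
    gaussDens v x * gaussDens (v * (1 - r ^ 2)) (c - r * x) =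
      gaussDens v c * gaussDens (v * (1 - r ^ 2)) (x - r * c) := by
  have exponents : -x ^ 2 / (2 * v) + -(c - r * x) ^ 2 / (2 * (v * (1 - r ^ 2))) =
      -c ^ 2 / (2 * v) + -(x - r * c) ^ 2 / (2 * (v * (1 - r ^ 2))) := by
    field_simp
    ring
  simp only [gaussDens]
  rw [mul_mul_mul_comm, ← exp_add, exponents, exp_add]
  ring

lemma lintegral_gaussDens_mul_gaussDens_sub_mul {v r : ℝ} (hv : 0 < v) (hr : r ^ 2 < 1)
    (c : ℝ) :
    ∫⁻ x, ENNReal.ofReal (gaussDens v x * gaussDens (v * (1 - r ^ 2)) (c - r * x)) =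
      ENNReal.ofReal (gaussDens v c) := by
  have hγ : 0 < v * (1 - r ^ 2) := mul_pos hv (by linarith)
  simp_rw [gaussDens_mul_gaussDens_sub_mul_comm hv.ne' (by linarith : 1 - r ^ 2 ≠ 0) c,
    ENNReal.ofReal_mul (gaussDens_nonneg _ _)]
  rw [lintegral_const_mul _ (by fun_prop), lintegral_ofReal_gaussDens_sub hγ, mul_one]

lemma lintegral_gaussDens_mul_fWN {v r : ℝ} (hv : 0 < v) (hr : r ^ 2 < 1) (μ θ : ℝ) :
    ∫⁻ x, ENNReal.ofReal (gaussDens v x * fWN (μ + r * x) (v * (1 - r ^ 2)) θ) =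
      ENNReal.ofReal (fWN μ v θ) := by
  have hγ : 0 < v * (1 - r ^ 2) := mul_pos hv (by linarith)
  have unwrap : ∀ x, ENNReal.ofReal (gaussDens v x * fWN (μ + r * x) (v * (1 - r ^ 2)) θ) =
      ∑' k : ℤ, ENNReal.ofReal
        (gaussDens v x * gaussDens (v * (1 - r ^ 2)) (θ - μ + 2 * k * π - r * x)) := by
    intro x
    rw [ENNReal.ofReal_mul (gaussDens_nonneg _ _), ofReal_fWN hγ, ← ENNReal.tsum_mul_left]
    refine tsum_congr fun k => ?_
    rw [← ENNReal.ofReal_mul (gaussDens_nonneg _ _)]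
    congr 3
    ring
  simp_rw [unwrap]
  rw [lintegral_tsum fun k => by fun_prop, ofReal_fWN hv]
  simp_rw [lintegral_gaussDens_mul_gaussDens_sub_mul hv hr]

lemma integrable_gaussDens_mul_fWN {v r : ℝ} (hv : 0 < v) (hr : r ^ 2 < 1) (μ θ : ℝ) :
    Integrable fun x => gaussDens v x * fWN (μ + r * x) (v * (1 - r ^ 2)) θ := by
  refine ⟨by fun_prop, (hasFiniteIntegral_iff_ofReal (ae_of_all _ fun x => ?_)).2 ?_⟩
  · exact mul_nonneg (gaussDens_nonneg _ _) (fWN_nonneg _ _ _)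
  · rw [lintegral_gaussDens_mul_fWN hv hr]
    exact ENNReal.ofReal_lt_top

lemma integral_gaussDens_mul_fWN {v r : ℝ} (hv : 0 < v) (hr : r ^ 2 < 1) (μ θ : ℝ) :
    ∫ x, gaussDens v x * fWN (μ + r * x) (v * (1 - r ^ 2)) θ = fWN μ v θ := by
  rw [integral_eq_lintegral_of_nonneg_ae
      (ae_of_all _ fun x => mul_nonneg (gaussDens_nonneg _ _) (fWN_nonneg _ _ _)) (by fun_prop),
    lintegral_gaussDens_mul_fWN hv hr, ENNReal.toReal_ofReal (fWN_nonneg _ _ _)]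

lemma lintegral_Ioc_tsum_add_zsmul {T : ℝ} (hT : 0 < T) (a : ℝ) {f : ℝ → ℝ≥0∞}
    (hf : Measurable f) :
    ∫⁻ x in Ioc a (a + T), ∑' n : ℤ, f (x + n • T) = ∫⁻ x, f x := by
  have shift : ∀ n : ℤ, ∫⁻ x in Ioc a (a + T), f (x + n • T) =
      ∫⁻ x in Ioc (a + n • T) (a + (n + 1) • T), f x := fun n => by
    rw [(measurePreserving_add_right volume (n • T)).setLIntegral_comp_emb
      (measurableEmbedding_addRight _), image_add_const_Ioc, add_smul, one_smul]
    ring_nf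
  rw [lintegral_tsum fun n => by fun_prop]
  simp_rw [shift]
  rw [← lintegral_iUnion (fun _ => measurableSet_Ioc) (pairwise_disjoint_Ioc_add_zsmul a T),
    iUnion_Ioc_add_zsmul hT, Measure.restrict_univ]

lemma integral_Ioc_tsum_add_zsmul {T : ℝ} (hT : 0 < T) (a : ℝ) {f : ℝ → ℝ}
    (hf_nonneg : 0 ≤ f) (hf : Integrable f) (hf_meas : Measurable f) :
    ∫ x in Ioc a (a + T), ∑' n : ℤ, f (x + n • T) = ∫ x, f x := by
  have hF : Measurable fun x => ∑' n : ℤ, ENNReal.ofReal (f (x + n • T)) :=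
    Measurable.tsum fun n => by fun_prop
  have lintegral_eq := lintegral_Ioc_tsum_add_zsmul hT a hf_meas.ennreal_ofReal
  have tsum_eq_toReal : ∀ x,
      ∑' n : ℤ, f (x + n • T) = (∑' n : ℤ, ENNReal.ofReal (f (x + n • T))).toReal := by
    intro x
    rw [ENNReal.tsum_toReal_eq fun _ => ENNReal.ofReal_ne_top]
    simp_rw [ENNReal.toReal_ofReal (hf_nonneg _)]
  simp_rw [tsum_eq_toReal]
  rw [integral_toReal hF.aemeasurable, lintegral_eq,
    integral_eq_lintegral_of_nonneg_ae (ae_of_all _ hf_nonneg) hf.aestronglyMeasurable]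
  refine ae_lt_top hF ?_
  rw [lintegral_eq]
  exact hf.lintegral_lt_top.ne

lemma wouVar_eq (α σ t : ℝ) :
    wouVar α σ t = σ ^ 2 / (2 * α) * (1 - exp (-(α * t)) ^ 2) := by
  rw [wouVar, ← exp_nat_mul]
  ring_nf

lemma fWN_mul_pWOU {α μ σ : ℝ} (hv : 0 < σ ^ 2 / (2 * α)) (t θ θs : ℝ) :
    fWN μ (σ ^ 2 / (2 * α)) θs * pWOU α μ σ t θ θs =
      ∑' m : ℤ, gaussDens (σ ^ 2 / (2 * α)) (θs - μ + 2 * m * π) *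
        fWN (μ + exp (-(α * t)) * (θs - μ + 2 * m * π)) (wouVar α σ t) θ := by
  rw [pWOU, ← tsum_mul_left]
  refine tsum_congr fun m => ?_
  rw [wnWeight, ← mul_assoc, mul_div_cancel₀ _ (fWN_pos hv μ θs).ne', wouMean]

/-- The wrapped normal density `f_WN(·; μ, σ²/(2α))` is stationary for the WOU
conditional density. -/
theorem pWOU_stationary (α μ σ : ℝ) (hα : 0 < α) (hσ : 0 < σ)
    (θ : ℝ) (t : ℝ) (ht : 0 < t) :
    (∫ θs in (-Real.pi)..Real.pi, fWN μ (σ ^ 2 / (2 * α)) θs * pWOU α μ σ t θ θs) =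
      fWN μ (σ ^ 2 / (2 * α)) θ := by
  set v := σ ^ 2 / (2 * α)
  set r := exp (-(α * t))
  have hv : 0 < v := by positivity
  have hr : r ^ 2 < 1 :=
    pow_lt_one₀ (exp_pos _).le (exp_lt_one_iff.2 (neg_lt_zero.2 (mul_pos hα ht))) two_ne_zero
  set h : ℝ → ℝ := fun x => gaussDens v x * fWN (μ + r * x) (v * (1 - r ^ 2)) θ
  have h_nonneg : 0 ≤ h := fun x => mul_nonneg (gaussDens_nonneg _ _) (fWN_nonneg _ _ _)
  have h_shift_int : Integrable fun x => h (x - μ) :=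
    (integrable_gaussDens_mul_fWN hv hr μ θ).comp_sub_right μ
  rw [intervalIntegral.integral_of_le (by linarith [pi_pos])]
  calc ∫ θs in Ioc (-π) π, fWN μ v θs * pWOU α μ σ t θ θs
      = ∫ θs in Ioc (-π) (-π + 2 * π), ∑' m : ℤ, h (θs + m • (2 * π) - μ) := by
        rw [show -π + 2 * π = π by ring]
        refine setIntegral_congr_fun measurableSet_Ioc fun θs _ => ?_
        rw [fWN_mul_pWOU hv, wouVar_eq]
        congr! 2 with m
        rw [zsmul_eq_mul, show θs + m * (2 * π) - μ = θs - μ + 2 * m * π by ring]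
    _ = ∫ x, h (x - μ) :=
        integral_Ioc_tsum_add_zsmul (f := fun x => h (x - μ)) (by positivity) _
          (fun x => h_nonneg (x - μ)) h_shift_int (by fun_prop)
    _ = fWN μ v θ := by
        rw [integral_sub_right_eq_self h μ, integral_gaussDens_mul_fWN hv hr]
end

section
/- (Interpolation form of the OU covariance for 2×2 matrices.) Let A be a real invertible 2×2 matrix with s := tr(A)/2, det(A − s·I) < 0, and q := √(−det(A − s·I)) > 0, and let Σ be a real 2×2 matrix. Setting a(t) := e^{st}·(cosh(qt) − s·sinh(qt)/q), b(t) := e^{st}·sinh(qt)/q, s(t) := 1 − a(−2t), and i(t) := −(1/2)·b(−2t), one has (1/2)·A⁻¹·(I − exp(−2tA))·Σ = s(t)·(1/2)·A⁻¹Σ + i(t)·Σ for every t ∈ ℝ. -/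
/-!
Write `A = s • 1 + B` with `B` traceless. By Cayley–Hamilton `B * B = -det B • 1 = q ^ 2 • 1`, so the
even and odd parts of the exponential series of `u • B` are the series of `cosh (q u)` and
`sinh (q u) / q • B`; as `s • 1` commutes with `B`, this gives `exp (u • A) = a u • 1 + b u • A`.
Multiplying `1 - exp (-2t • A)` by `A⁻¹` then turns the `A`-term into `1`.
-/

open Matrix Real

namespace NormedSpace

section TopologicalAlgebra

variable {𝔸 : Type*} [Ring 𝔸] [Algebra ℝ 𝔸] [TopologicalSpace 𝔸] [IsTopologicalRing 𝔸]
  [ContinuousSMul ℝ 𝔸] [T2Space 𝔸]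

theorem exp_smul_of_mul_self_eq_sq_smul_one {B : 𝔸} {q : ℝ} (hq : q ≠ 0)
    (hB : B * B = q ^ 2 • 1) (u : ℝ) :
    exp (u • B) = cosh (q * u) • 1 + (sinh (q * u) / q) • B := by
  have hpow_even (k : ℕ) : (u • B) ^ (2 * k) = (q * u) ^ (2 * k) • 1 := by
    rw [pow_mul, sq, smul_mul_smul_comm, hB, smul_smul, smul_pow, one_pow, pow_mul]
    ring_nf
  have hpow_odd (k : ℕ) : (u • B) ^ (2 * k + 1) = ((q * u) ^ (2 * k + 1) / q) • B := by
    rw [pow_succ, hpow_even, smul_mul_smul_comm, one_mul, pow_succ]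
    congr 1
    field_simp
  rw [exp_eq_tsum ℝ]
  refine HasSum.tsum_eq (HasSum.even_add_odd ?_ ?_)
  · convert (hasSum_cosh (q * u)).smul_const (1 : 𝔸) using 2 with k
    rw [hpow_even, smul_smul, div_eq_inv_mul]
  · convert ((hasSum_sinh (q * u)).div_const q).smul_const B using 2 with k
    rw [hpow_odd, smul_smul]
    ring_nf

theorem exp_smul_one (c : ℝ) : exp (c • (1 : 𝔸)) = Real.exp c • 1 := by
  rw [exp_eq_tsum ℝ]
  refine HasSum.tsum_eq ?_
  convert (expSeries_div_hasSum_exp c).smul_const (1 : 𝔸) using 2 with n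
  · rw [smul_pow, one_pow, smul_smul, div_eq_inv_mul]
  · exact congrFun Real.exp_eq_exp_ℝ c

end TopologicalAlgebra

theorem exp_smul_of_sub_smul_one_mul_self_eq_sq_smul_one {𝔸 : Type*} [NormedRing 𝔸]
    [NormedAlgebra ℝ 𝔸] [CompleteSpace 𝔸] {A : 𝔸} {s q : ℝ} (hq : q ≠ 0)
    (hA : (A - s • 1) * (A - s • 1) = q ^ 2 • 1) (u : ℝ) :
    exp (u • A) = (Real.exp (s * u) * (cosh (q * u) - s * sinh (q * u) / q)) • 1 +
      (Real.exp (s * u) * (sinh (q * u) / q)) • A := by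
  have hsplit : u • A = (s * u) • 1 + u • (A - s • 1) := by module
  have hcomm : Commute ((s * u) • (1 : 𝔸)) (u • (A - s • 1)) :=
    ((Commute.one_left _).smul_left _).smul_right _
  let _ : NormedAlgebra ℚ 𝔸 := .restrictScalars ℚ ℝ 𝔸
  rw [hsplit, exp_add_of_commute hcomm, exp_smul_one, exp_smul_of_mul_self_eq_sq_smul_one hq hA]
  simp only [smul_mul_assoc, one_mul]
  module

end NormedSpace

theorem Matrix.mul_self_eq_neg_det_smul_one_of_trace_eq_zero {R : Type*} [CommRing R]
    {B : Matrix (Fin 2) (Fin 2) R} (hB : B.trace = 0) : B * B = -B.det • 1 := by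
  nontriviality R
  have := B.aeval_self_charpoly
  rw [charpoly_fin_two, hB] at this
  simpa [Algebra.algebraMap_eq_smul_one, sq, eq_neg_iff_add_eq_zero] using this

/-- Interpolation form of the OU covariance for 2×2 matrices: with
`a(t) = e^{st}(cosh(qt) − s·sinh(qt)/q)`, `b(t) = e^{st}·sinh(qt)/q`,
`s(t) = 1 − a(−2t)` and `i(t) = −(1/2)·b(−2t)`, one has
`(1/2)·A⁻¹·(I − exp(−2tA))·Σ = s(t)·(1/2)·A⁻¹Σ + i(t)·Σ`. -/
theorem ou_covariance_interpolation (A : Matrix (Fin 2) (Fin 2) ℝ)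
    (hA : IsUnit A)
    (s : ℝ) (hs : s = A.trace / 2)
    (hdet : (A - s • (1 : Matrix (Fin 2) (Fin 2) ℝ)).det < 0)
    (q : ℝ) (hq : q = Real.sqrt (-(A - s • (1 : Matrix (Fin 2) (Fin 2) ℝ)).det))
    (S : Matrix (Fin 2) (Fin 2) ℝ)
    (a b : ℝ → ℝ)
    (ha : ∀ t : ℝ, a t = Real.exp (s * t) * (Real.cosh (q * t) - s * Real.sinh (q * t) / q))
    (hb : ∀ t : ℝ, b t = Real.exp (s * t) * (Real.sinh (q * t) / q))
    (t : ℝ) :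
    (1 / 2 : ℝ) • (A⁻¹ * (1 - NormedSpace.exp ((-(2 * t)) • A)) * S) =
      (1 - a (-2 * t)) • ((1 / 2 : ℝ) • (A⁻¹ * S)) + (-(1 / 2 : ℝ) * b (-2 * t)) • S := by
  have htrace : (A - s • 1).trace = 0 := by
    rw [trace_sub, trace_smul, trace_one, hs]
    norm_num
  have hq0 : q ≠ 0 := by
    rw [hq]
    exact (Real.sqrt_pos.2 (neg_pos.2 hdet)).ne'
  have hsq : (A - s • 1) * (A - s • 1) = q ^ 2 • 1 := by
    rw [mul_self_eq_neg_det_smul_one_of_trace_eq_zero htrace, hq, sq_sqrt (neg_nonneg.2 hdet.le)]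
  have hexp : NormedSpace.exp ((-(2 * t)) • A) = a (-2 * t) • 1 + b (-2 * t) • A := by
    rw [ha, hb, neg_mul]
    -- `exp` only sees the topology; the operator norm makes the matrices a Banach algebra.
    exact open scoped Matrix.Norms.Operator in
      NormedSpace.exp_smul_of_sub_smul_one_mul_self_eq_sq_smul_one hq0 hsq _
  have hinv : A⁻¹ * A = 1 := nonsing_inv_mul A ((isUnit_iff_isUnit_det A).1 hA)
  rw [hexp]
  simp only [mul_sub, mul_add, mul_smul_comm, mul_one, hinv, sub_mul, add_mul, smul_mul_assoc,
    one_mul]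
  module
end
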